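/- arXiv:0904.1261 — 4 statements merged into one kernel-verified Lean document; each statement's English description precedes it below -/
import Mathlib

section
/- Let Ω ⊂ ℝⁿ be open and let w ∈ C²(Ω) satisfy Δw = β_ε(w) in Ω, where β_ε(s) = (1/ε)β(s/ε) with β Lipschitz. Set B_ε(z) = ∫₀^z β_ε(s) ds and χ_ε(x) = 2B_ε(w(x)). Then for every φ ∈ C¹_c(Ω; ℝⁿ), ∫_Ω (|∇w|² div φ − 2 (∇w)ᵀ (Dφ) ∇w + χ_ε div φ) dx = 0. -/
/-!
With `G = ∇w`, consider the vector field `V = (|G|² + χ_ε) φ - 2 ⟪G, φ⟫ G`. The product rule and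
the symmetry of the Hessian of `w` give
`div V = |G|² div φ - 2 ⟪Dφ G, G⟫ + χ_ε div φ + ⟪∇χ_ε, φ⟫ - 2 Δw ⟪G, φ⟫`,
and the last two terms cancel because `∇χ_ε = 2 β_ε(w) G` and `Δw = β_ε(w)`.
Since `V` is `C¹` with compact support in `Ω`, the integral of `div V` vanishes.
-/

open MeasureTheory Metric Set Filter
open scoped Topology ENNReal NNReal RealInnerProductSpace

noncomputable section

/-- Euclidean space `ℝⁿ`. -/
abbrev En (n : ℕ) := EuclideanSpace ℝ (Fin n)

/-- The Laplacian of a scalar function, as the sum of second partial derivatives. -/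
def lap {n : ℕ} (u : En n → ℝ) (x : En n) : ℝ :=
  ∑ i, fderiv ℝ (fun y => fderiv ℝ u y (EuclideanSpace.single i 1)) x
    (EuclideanSpace.single i 1)

/-- The divergence of a vector field. -/
def dvg {n : ℕ} (φ : En n → En n) (x : En n) : ℝ :=
  ∑ i, fderiv ℝ (fun y => φ y i) x (EuclideanSpace.single i 1)

open Function

section IntegralFDeriv

variable {E F : Type*} [NormedAddCommGroup E] [NormedSpace ℝ E] [FiniteDimensional ℝ E]
  [MeasurableSpace E] [BorelSpace E] [NormedAddCommGroup F] [NormedSpace ℝ F]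
  {μ : Measure E} [μ.IsAddHaarMeasure]

theorem integral_fderiv_apply_eq_zero {g : E → F} (hg : ContDiff ℝ 1 g) (hc : HasCompactSupport g)
    (v : E) : ∫ x, fderiv ℝ g x v ∂μ = 0 := by
  have hg' : Continuous fun x => fderiv ℝ g x v :=
    (hg.continuous_fderiv one_ne_zero).clm_apply continuous_const
  simpa using integral_smul_fderiv_eq_neg_fderiv_smul_of_integrable (μ := μ)
    (f := fun _ => (1 : ℝ)) (g := g) (v := v) (by simp)
    (by simpa using hg'.integrable_of_hasCompactSupport (hc.fderiv_apply ℝ v))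
    (by simpa using hg.continuous.integrable_of_hasCompactSupport hc)
    (fun _ _ => differentiableAt_const _) (fun x _ => hg.differentiable one_ne_zero x)

end IntegralFDeriv

theorem contDiff_of_contDiffOn_of_tsupport_subset {E F : Type*} [NormedAddCommGroup E]
    [NormedSpace ℝ E] [NormedAddCommGroup F] [NormedSpace ℝ F] {n : WithTop ℕ∞} {f : E → F}
    {s : Set E} (hf : ContDiffOn ℝ n f s) (hs : IsOpen s) (hfs : tsupport f ⊆ s) :
    ContDiff ℝ n f :=
  contDiff_of_contDiffOn_union_of_isOpen hf
    (contDiffOn_const.congr fun _ hx => image_eq_zero_of_notMem_tsupport hx)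
    (compl_subset_iff_union.1 (compl_subset_compl.2 hfs)) hs (isClosed_tsupport f).isOpen_compl

section Gradient

variable {E : Type*} [NormedAddCommGroup E] [InnerProductSpace ℝ E] [CompleteSpace E]
  {w : E → ℝ} {x : E}

theorem hasFDerivAt_gradient (hw : DifferentiableAt ℝ (fderiv ℝ w) x) :
    HasFDerivAt (gradient w)
      ((InnerProductSpace.toDual ℝ E).symm.toContinuousLinearEquiv.toContinuousLinearMap.comp
        (fderiv ℝ (fderiv ℝ w) x)) x :=
  (InnerProductSpace.toDual ℝ E).symm.toContinuousLinearEquiv.hasFDerivAt.comp x hw.hasFDerivAt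

theorem inner_fderiv_gradient_apply (hw : DifferentiableAt ℝ (fderiv ℝ w) x) (u v : E) :
    ⟪fderiv ℝ (gradient w) x u, v⟫ = fderiv ℝ (fderiv ℝ w) x u v := by
  rw [(hasFDerivAt_gradient hw).fderiv]
  exact InnerProductSpace.toDual_symm_apply

theorem ContDiffAt.differentiableAt_gradient (hw : ContDiffAt ℝ 2 w x) :
    DifferentiableAt ℝ (gradient w) x :=
  (hasFDerivAt_gradient ((hw.fderiv_right (m := 1) le_rfl).differentiableAt one_ne_zero))
    |>.differentiableAt

theorem ContDiffAt.inner_fderiv_gradient_comm (hw : ContDiffAt ℝ 2 w x) (u v : E) :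
    ⟪fderiv ℝ (gradient w) x u, v⟫ = ⟪fderiv ℝ (gradient w) x v, u⟫ := by
  have hw' := (hw.fderiv_right (m := 1) le_rfl).differentiableAt one_ne_zero
  rw [inner_fderiv_gradient_apply hw', inner_fderiv_gradient_apply hw',
    hw.isSymmSndFDerivAt (by simp)]

theorem ContDiffOn.gradient {m n : WithTop ℕ∞} {s : Set E} (hw : ContDiffOn ℝ n w s)
    (hs : IsOpen s) (hmn : m + 1 ≤ n) : ContDiffOn ℝ m (gradient w) s :=
  (InnerProductSpace.toDual ℝ E).symm.toContinuousLinearEquiv.contDiff.comp_contDiffOn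
    (hw.fderiv_of_isOpen hs hmn)

end Gradient

namespace EuclideanSpace

theorem sum_smul_apply_single {ι F : Type*} [Fintype ι] [DecidableEq ι] [NormedAddCommGroup F]
    [NormedSpace ℝ F] (g : EuclideanSpace ℝ ι →L[ℝ] F) (u : EuclideanSpace ℝ ι) :
    ∑ i, u i • g (single i 1) = g u := by
  conv_rhs => rw [← (basisFun ι ℝ).sum_repr u]
  simp

end EuclideanSpace

section Divergence

variable {n : ℕ} {x : En n}

theorem fderiv_apply_coord {φ : En n → En n} (hφ : DifferentiableAt ℝ φ x) (i : Fin n)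
    (v : En n) : fderiv ℝ (fun y => φ y i) x v = fderiv ℝ φ x v i :=
  congrArg (· v) ((EuclideanSpace.proj (𝕜 := ℝ) i).hasFDerivAt.comp x hφ.hasFDerivAt).fderiv

theorem dvg_eq_sum {φ : En n → En n} (hφ : DifferentiableAt ℝ φ x) :
    dvg φ x = ∑ i, fderiv ℝ φ x (EuclideanSpace.single i 1) i := by
  simp only [dvg, fderiv_apply_coord hφ]

theorem dvg_sub {φ ψ : En n → En n} (hφ : DifferentiableAt ℝ φ x)
    (hψ : DifferentiableAt ℝ ψ x) :
    dvg (fun y => φ y - ψ y) x = dvg φ x - dvg ψ x := by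
  rw [dvg_eq_sum (hφ.fun_sub hψ), dvg_eq_sum hφ, dvg_eq_sum hψ, fderiv_fun_sub hφ hψ,
    ← Finset.sum_sub_distrib]
  rfl

theorem dvg_smul {a : En n → ℝ} {φ : En n → En n} (ha : DifferentiableAt ℝ a x)
    (hφ : DifferentiableAt ℝ φ x) :
    dvg (fun y => a y • φ y) x = a x * dvg φ x + fderiv ℝ a x (φ x) := by
  rw [dvg_eq_sum (ha.fun_smul hφ), dvg_eq_sum hφ, fderiv_fun_smul ha hφ,
    ← EuclideanSpace.sum_smul_apply_single (fderiv ℝ a x), Finset.mul_sum,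
    ← Finset.sum_add_distrib]
  simp [mul_comm]

theorem dvg_gradient (w : En n → ℝ) : dvg (gradient w) = lap w := by
  ext x
  have hcoord : ∀ i,
      (fun y => gradient w y i) = fun y => fderiv ℝ w y (EuclideanSpace.single i 1) :=
    fun i => funext fun y => by
      rw [← inner_gradient_left, EuclideanSpace.inner_single_right]
      simp
  simp only [dvg, lap, hcoord]

theorem dvg_eq_zero_of_notMem_tsupport {φ : En n → En n} (hx : x ∉ tsupport φ) :
    dvg φ x = 0 :=
  Finset.sum_eq_zero fun i _ => by
    change fderiv ℝ ((fun v : En n => v i) ∘ φ) x _ = 0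
    rw [fderiv_of_notMem_tsupport ℝ fun h =>
      hx (tsupport_comp_subset (g := fun v : En n => v i) rfl φ h)]
    rfl

theorem integral_dvg_eq_zero {φ : En n → En n} (hφ : ContDiff ℝ 1 φ)
    (hc : HasCompactSupport φ) : ∫ x, dvg φ x = 0 := by
  have hcoord : ∀ i : Fin n, ContDiff ℝ 1 fun y => φ y i :=
    fun i => (EuclideanSpace.proj (𝕜 := ℝ) i).contDiff.comp hφ
  have hcoord_supp : ∀ i : Fin n, HasCompactSupport fun y => φ y i :=
    fun i => hc.comp_left (g := fun v : En n => v i) rfl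
  rw [show dvg φ = fun x => ∑ i, _ from rfl, integral_finsetSum]
  · exact Finset.sum_eq_zero fun i _ => integral_fderiv_apply_eq_zero (hcoord i) (hcoord_supp i) _
  · intro i _
    exact (((hcoord i).continuous_fderiv one_ne_zero).clm_apply continuous_const
      ).integrable_of_hasCompactSupport ((hcoord_supp i).fderiv_apply ℝ _)

end Divergence

section PohozaevField

variable {n : ℕ} {w χ : En n → ℝ} {φ : En n → En n}

def pohozaevField (w χ : En n → ℝ) (φ : En n → En n) (y : En n) : En n :=
  (‖gradient w y‖ ^ 2 + χ y) • φ y - (2 * ⟪gradient w y, φ y⟫) • gradient w y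

theorem support_pohozaevField_subset : support (pohozaevField w χ φ) ⊆ support φ :=
  support_subset_iff'.2 fun y hy => by simp [pohozaevField, notMem_support.1 hy]

theorem ContDiffOn.pohozaevField {m : WithTop ℕ∞} {s : Set (En n)}
    (hw : ContDiffOn ℝ (m + 1) w s) (hχ : ContDiffOn ℝ m χ s) (hφ : ContDiffOn ℝ m φ s)
    (hs : IsOpen s) :
    ContDiffOn ℝ m (pohozaevField w χ φ) s := by
  have hG := hw.gradient hs le_rfl
  exact (((hG.norm_sq ℝ).add hχ).smul hφ).sub
    ((contDiffOn_const.mul (hG.inner ℝ hφ)).smul hG)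

theorem dvg_pohozaevField {x : En n} (hw : ContDiffAt ℝ 2 w x) (hχ : DifferentiableAt ℝ χ x)
    (hφ : DifferentiableAt ℝ φ x) :
    dvg (pohozaevField w χ φ) x = ‖gradient w x‖ ^ 2 * dvg φ x
      - 2 * ⟪fderiv ℝ φ x (gradient w x), gradient w x⟫ + χ x * dvg φ x
      + fderiv ℝ χ x (φ x) - 2 * lap w x * ⟪gradient w x, φ x⟫ := by
  have hG := hw.differentiableAt_gradient
  have ha : DifferentiableAt ℝ (fun y => ‖gradient w y‖ ^ 2 + χ y) x := (hG.norm_sq ℝ).add hχ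
  have hc : DifferentiableAt ℝ (fun y => 2 * ⟪gradient w y, φ y⟫) x :=
    (hG.inner ℝ hφ).const_mul 2
  rw [show pohozaevField w χ φ = fun y => (‖gradient w y‖ ^ 2 + χ y) • φ y
      - (2 * ⟪gradient w y, φ y⟫) • gradient w y from rfl,
    dvg_sub (ha.fun_smul hφ) (hc.fun_smul hG), dvg_smul ha hφ, dvg_smul hc hG, dvg_gradient,
    ((hG.hasFDerivAt.norm_sq).fun_add hχ.hasFDerivAt).fderiv,
    ((hG.hasFDerivAt.inner ℝ hφ.hasFDerivAt).const_mul 2).fderiv]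
  have hsymm : ⟪gradient w x, fderiv ℝ (gradient w) x (φ x)⟫
      = ⟪fderiv ℝ (gradient w) x (gradient w x), φ x⟫ := by
    rw [real_inner_comm, hw.inner_fderiv_gradient_comm]
  simp only [add_apply, smul_apply, ContinuousLinearMap.comp_apply, coe_innerSL_apply,
    ContinuousLinearMap.prod_apply, fderivInnerCLM_apply, smul_eq_mul, nsmul_eq_mul,
    Nat.cast_ofNat, hsymm, real_inner_comm (gradient w x) (fderiv ℝ φ x (gradient w x))]
  ring

end PohozaevField

theorem stmt0_general {n : ℕ} (Ω : Set (En n)) (hΩ : IsOpen Ω)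
    (β : ℝ → ℝ) (L : NNReal) (hβlip : LipschitzWith L β)
    (ε : ℝ)
    (βε : ℝ → ℝ) (hβε : ∀ s, βε s = ε⁻¹ * β (s / ε))
    (w : En n → ℝ) (hw : ContDiffOn ℝ 2 w Ω)
    (hpde : ∀ x ∈ Ω, lap w x = βε (w x))
    (Bε : ℝ → ℝ) (hBε : ∀ z, Bε z = ∫ s in (0:ℝ)..z, βε s)
    (χε : En n → ℝ) (hχ : ∀ x, χε x = 2 * Bε (w x))
    (φ : En n → En n) (hφ1 : ContDiff ℝ 1 φ) (hφc : HasCompactSupport φ)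
    (hφΩ : tsupport φ ⊆ Ω) :
    ∫ x in Ω, (‖gradient w x‖ ^ 2 * dvg φ x
      - 2 * ⟪(fderiv ℝ φ x) (gradient w x), gradient w x⟫
      + χε x * dvg φ x) = 0 := by
  have hβε_cont : Continuous βε := by
    rw [funext hβε]
    exact continuous_const.mul (hβlip.continuous.comp (continuous_id.div_const ε))
  have hBε_deriv : ∀ z, HasDerivAt Bε (βε z) z := by
    rw [funext hBε]
    exact fun z => (hβε_cont.integral_hasStrictDerivAt 0 z).hasDerivAt
  have hBε_smooth : ContDiff ℝ 1 Bε := contDiff_one_iff_deriv.2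
    ⟨fun z => (hBε_deriv z).differentiableAt, by
      rwa [funext fun z => (hBε_deriv z).deriv]⟩
  rw [funext hχ]
  have hχ_deriv : ∀ x ∈ Ω, HasFDerivAt (fun y => 2 * Bε (w y))
      ((2 * βε (w x)) • fderiv ℝ w x) x := fun x hx => by
    have hwx := (hw.differentiableOn two_ne_zero x hx).differentiableAt (hΩ.mem_nhds hx)
    simpa [smul_smul] using ((hBε_deriv (w x)).comp_hasFDerivAt x hwx.hasFDerivAt).const_mul 2
  set V := pohozaevField w (fun y => 2 * Bε (w y)) φ
  have hV_supp : tsupport V ⊆ Ω := (closure_mono support_pohozaevField_subset).trans hφΩ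
  have hV_smooth : ContDiff ℝ 1 V :=
    contDiff_of_contDiffOn_of_tsupport_subset
      (hw.pohozaevField (contDiffOn_const.mul (hBε_smooth.comp_contDiffOn
        (hw.of_le one_le_two))) hφ1.contDiffOn hΩ) hΩ hV_supp
  calc _ = ∫ x in Ω, dvg V x := setIntegral_congr_fun hΩ.measurableSet fun x hx => by
        rw [dvg_pohozaevField (hw.contDiffAt (hΩ.mem_nhds hx)) (hχ_deriv x hx).differentiableAt
          (hφ1.differentiable one_ne_zero x), (hχ_deriv x hx).fderiv, hpde x hx]
        simp [inner_gradient_left]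
    _ = ∫ x, dvg V x := setIntegral_eq_integral_of_forall_compl_eq_zero fun x hx =>
        dvg_eq_zero_of_notMem_tsupport fun h => hx (hV_supp h)
    _ = 0 := integral_dvg_eq_zero hV_smooth (hφc.mono support_pohozaevField_subset)

/-- Domain variation (Pohozaev type) identity: if `Δ w = β_ε(w)` in an open set `Ω`,
`B_ε` is the primitive of `β_ε` vanishing at `0` and `χ_ε = 2 B_ε ∘ w`, then for every
`C¹` compactly supported vector field `φ` with support in `Ω`,
`∫_Ω |∇w|² div φ − 2 (∇w)ᵀ Dφ ∇w + χ_ε div φ = 0`. -/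
theorem stmt0 {n : ℕ} (Ω : Set (En n)) (hΩ : IsOpen Ω)
    (β : ℝ → ℝ) (L : NNReal) (hβlip : LipschitzWith L β)
    (ε : ℝ) (hε : 0 < ε)
    (βε : ℝ → ℝ) (hβε : ∀ s, βε s = ε⁻¹ * β (s / ε))
    (w : En n → ℝ) (hw : ContDiffOn ℝ 2 w Ω)
    (hpde : ∀ x ∈ Ω, lap w x = βε (w x))
    (Bε : ℝ → ℝ) (hBε : ∀ z, Bε z = ∫ s in (0:ℝ)..z, βε s)
    (χε : En n → ℝ) (hχ : ∀ x, χε x = 2 * Bε (w x))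
    (φ : En n → En n) (hφ1 : ContDiff ℝ 1 φ) (hφc : HasCompactSupport φ)
    (hφΩ : tsupport φ ⊆ Ω) :
    ∫ x in Ω, (‖gradient w x‖ ^ 2 * dvg φ x
      - 2 * ⟪(fderiv ℝ φ x) (gradient w x), gradient w x⟫
      + χε x * dvg φ x) = 0 :=
  stmt0_general Ω hΩ β L hβlip ε βε hβε w hw hpde Bε hBε χε hχ φ hφ1 hφc hφΩ
end
end

section
/- Let v : ℝ² → ℝ be positively homogeneous of degree 1, and suppose there exist two distinct unit vectors e¹ ≠ e² and a nonzero unit vector ν with e¹·ν > 0, e²·ν > 0, such that on neighborhoods of the half-lines {α e¹ : α > 0} and {α e² : α > 0} the gradient of v satisfies ∇v = (∇v·e¹) e¹ and ∇v = (∇v·e²) e² respectively (reflection symmetry across each half-line). If moreover v(x) = c x·ν on the half-plane {x·ν > 0}, then c = 0. -/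
open MeasureTheory Metric Set Filter
open scoped Topology ENNReal NNReal RealInnerProductSpace

noncomputable section

/-!
On the open half-plane `{x·ν > 0}` the function `v` is the linear map `x ↦ c x·ν`, so its gradient
at `e¹` and at `e²` is `c ν`. If `c ≠ 0`, the symmetry condition at `eⁱ` says that `ν` is a
multiple of `eⁱ`, positive since `eⁱ·ν > 0`. Two unit vectors on the ray through `ν` coincide,
contradicting `e¹ ≠ e²`.
-/

section

variable {F : Type*} [NormedAddCommGroup F] [InnerProductSpace ℝ F]

theorem gradient_eq_smul_of_eq_inner_of_inner_pos [CompleteSpace F] {v : F → ℝ} {ν x : F}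
    {c : ℝ} (hv : ∀ y : F, 0 < ⟪y, ν⟫ → v y = c * ⟪y, ν⟫) (hx : 0 < ⟪x, ν⟫) :
    gradient v x = c • ν := by
  have hopen : IsOpen {y : F | 0 < ⟪y, ν⟫} :=
    isOpen_lt continuous_const (continuous_id.inner continuous_const)
  have heq : v =ᶠ[𝓝 x] fun y => ⟪c • ν, y⟫ := by
    filter_upwards [hopen.mem_nhds hx] with y hy
    rw [hv y hy, real_inner_smul_left, real_inner_comm]
  rw [heq.gradient_eq]
  exact (hasGradientAt_iff_hasFDerivAt.2 (innerSL ℝ (c • ν)).hasFDerivAt).gradient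

theorem sameRay_of_smul_eq_inner_smul {e ν : F} {c : ℝ} (hc : c ≠ 0)
    (hsym : c • ν = ⟪c • ν, e⟫ • e) (he : 0 < ⟪e, ν⟫) : SameRay ℝ e ν := by
  have hν : ν = ⟪e, ν⟫ • e := by
    refine smul_right_injective F hc ?_
    change c • ν = c • (⟪e, ν⟫ • e)
    rw [hsym, real_inner_smul_left, real_inner_comm, smul_smul]
  rw [hν]
  exact SameRay.sameRay_nonneg_smul_right e he.le

end

theorem stmt3_general (v : En 2 → ℝ)
    (e1 e2 ν : En 2) (h12 : e1 ≠ e2)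
    (he1 : ‖e1‖ = 1) (he2 : ‖e2‖ = 1)
    (h1ν : 0 < ⟪e1, ν⟫) (h2ν : 0 < ⟪e2, ν⟫)
    (U1 U2 : Set (En 2))
    (hU1' : {x : En 2 | ∃ a : ℝ, 0 < a ∧ x = a • e1} ⊆ U1)
    (hU2' : {x : En 2 | ∃ a : ℝ, 0 < a ∧ x = a • e2} ⊆ U2)
    (hs1 : ∀ x ∈ U1, gradient v x = ⟪gradient v x, e1⟫ • e1)
    (hs2 : ∀ x ∈ U2, gradient v x = ⟪gradient v x, e2⟫ • e2)
    (c : ℝ) (hv : ∀ x : En 2, 0 < ⟪x, ν⟫ → v x = c * ⟪x, ν⟫) :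
    c = 0 := by
  by_contra hc
  have hsym1 := hs1 e1 (hU1' ⟨1, one_pos, (one_smul ℝ e1).symm⟩)
  have hsym2 := hs2 e2 (hU2' ⟨1, one_pos, (one_smul ℝ e2).symm⟩)
  rw [gradient_eq_smul_of_eq_inner_of_inner_pos hv h1ν] at hsym1
  rw [gradient_eq_smul_of_eq_inner_of_inner_pos hv h2ν] at hsym2
  have hν : ν ≠ 0 := by
    rintro rfl
    simp at h1ν
  have hray : SameRay ℝ e1 e2 :=
    (sameRay_of_smul_eq_inner_smul hc hsym1 h1ν).trans
      (sameRay_of_smul_eq_inner_smul hc hsym2 h2ν).symm fun h => absurd h hν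
  exact h12 (hray.eq_of_norm_eq (he1.trans he2.symm))

/-- Two distinct lines of reflection symmetry through the origin meeting the supporting
half-plane `{x·ν > 0}` force the degree-1 homogeneous function `c (x·ν)⁺` to vanish:
`c = 0`. -/
theorem stmt3 (v : En 2 → ℝ)
    (hhom : ∀ l : ℝ, 0 < l → ∀ x, v (l • x) = l * v x)
    (e1 e2 ν : En 2) (h12 : e1 ≠ e2)
    (he1 : ‖e1‖ = 1) (he2 : ‖e2‖ = 1) (hν : ‖ν‖ = 1)
    (h1ν : 0 < ⟪e1, ν⟫) (h2ν : 0 < ⟪e2, ν⟫)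
    (U1 U2 : Set (En 2)) (hU1 : IsOpen U1) (hU2 : IsOpen U2)
    (hU1' : {x : En 2 | ∃ a : ℝ, 0 < a ∧ x = a • e1} ⊆ U1)
    (hU2' : {x : En 2 | ∃ a : ℝ, 0 < a ∧ x = a • e2} ⊆ U2)
    (hs1 : ∀ x ∈ U1, gradient v x = ⟪gradient v x, e1⟫ • e1)
    (hs2 : ∀ x ∈ U2, gradient v x = ⟪gradient v x, e2⟫ • e2)
    (c : ℝ) (hv : ∀ x : En 2, 0 < ⟪x, ν⟫ → v x = c * ⟪x, ν⟫) :
    c = 0 :=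
  stmt3_general v e1 e2 ν h12 he1 he2 h1ν h2ν U1 U2 hU1' hU2' hs1 hs2 c hv
end
end

section
/- Let w : D → ℝ be L-Lipschitz on an open set D ⊂ ℝ², let ε > 0 and c ∈ (0, 1/4]. Let I ⊂ [δ, r] be a set of radii with 𝓛¹(I) > r/2, and for each t ∈ I let x_t ∈ ∂B_t(0) satisfy w(x_t) = ε/2. Then there exists d > 0 depending only on L and c (not on ε) such that B_{dε}(x_t) ⊂ {x : cε ≤ w(x) ≤ (1−c)ε} for every t ∈ I, and 𝓛²( ⋃_{t∈I} B_{dε}(x_t) ) ≥ r d ε / 4, provided the balls B_{dε}(x_t) are contained in D. -/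
open MeasureTheory Metric Set Filter
open scoped Topology ENNReal NNReal RealInnerProductSpace

noncomputable section

/-! On each ball the Lipschitz bound moves `w` by at most `L d ε ≤ ε / 8` away from
`w (x_t) = ε / 2`, which keeps it in the band. For the area, sort the radii `t ∈ I` into
cells of length `2 d ε`. Since `|s - t| ≤ |x_s - x_t|`, balls around representatives of
two cells of the same parity are disjoint; one parity contains half of the cells, and there
are at least `𝓛¹(I) / (2 d ε)` cells. -/

theorem add_le_of_floor_div_add_two_le {b s t : ℝ} (hb : 0 < b) (h : ⌊s / b⌋ + 2 ≤ ⌊t / b⌋) :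
    s + b ≤ t := by
  have hs : s / b < ⌊s / b⌋ + 1 := Int.lt_floor_add_one _
  have ht : (⌊t / b⌋ : ℝ) ≤ t / b := Int.floor_le _
  have h' : (⌊s / b⌋ : ℝ) + 2 ≤ ⌊t / b⌋ := by exact_mod_cast h
  have : s / b + 1 ≤ t / b := by linarith
  rwa [div_add_one hb.ne', div_le_div_iff_of_pos_right hb] at this

theorem volume_le_encard_image_floor_mul {b : ℝ} (hb : 0 < b) (I : Set ℝ) :
    volume I ≤ ((fun t ↦ ⌊t / b⌋) '' I).encard * ENNReal.ofReal b := by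
  set S := (fun t ↦ ⌊t / b⌋) '' I
  have hcover : I ⊆ ⋃ n ∈ S, Ico (n * b) (n * b + b) := by
    intro t ht
    refine mem_iUnion₂_of_mem (mem_image_of_mem _ ht) ⟨?_, ?_⟩
    · exact (le_div_iff₀ hb).1 (Int.floor_le _)
    · have := (div_lt_iff₀ hb).1 (Int.lt_floor_add_one (t / b))
      linarith
  calc volume I ≤ ∑' n : S, volume (Ico (n * b : ℝ) (n * b + b)) :=
        (measure_mono hcover).trans (measure_biUnion_le _ S.to_countable _)
    _ = S.encard * ENNReal.ofReal b := by
        simp only [Real.volume_Ico, add_sub_cancel_left, ENNReal.tsum_set_const]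

theorem exists_encard_le_two_mul_encard_mod_two (S : Set ℤ) :
    ∃ k : ℤ, S.encard ≤ 2 * {n ∈ S | n % 2 = k}.encard := by
  have hcover : S ⊆ {n ∈ S | n % 2 = 0} ∪ {n ∈ S | n % 2 = 1} := fun n hn ↦
    (Int.emod_two_eq_zero_or_one n).imp (⟨hn, ·⟩) (⟨hn, ·⟩)
  have hle := (encard_le_encard hcover).trans (encard_union_le _ _)
  rcases le_total {n ∈ S | n % 2 = 0}.encard {n ∈ S | n % 2 = 1}.encard with h | h
  · exact ⟨1, hle.trans (by rw [two_mul]; gcongr)⟩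
  · exact ⟨0, hle.trans (by rw [two_mul]; gcongr)⟩

theorem mul_volume_le_measure_biUnion_ball {E : Type*} [PseudoMetricSpace E] [MeasurableSpace E]
    [OpensMeasurableSpace E] (μ : Measure E) {I : Set ℝ} {x : ℝ → E}
    (hx : ∀ s ∈ I, ∀ t ∈ I, |s - t| ≤ dist (x s) (x t)) {a : ℝ} (ha : 0 < a) {m : ℝ≥0∞}
    (hm : ∀ t ∈ I, m ≤ μ (ball (x t) a)) :
    m * volume I ≤ ENNReal.ofReal (4 * a) * μ (⋃ t ∈ I, ball (x t) a) := by
  set f : ℝ → ℤ := fun t ↦ ⌊t / (2 * a)⌋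
  obtain ⟨k, hk⟩ := exists_encard_le_two_mul_encard_mod_two (f '' I)
  set T := {n ∈ f '' I | n % 2 = k}
  set g := Function.invFunOn f I
  have hgI : ∀ n ∈ T, g n ∈ I := fun n hn ↦ Function.invFunOn_mem hn.1
  have hgf : ∀ n ∈ T, f (g n) = n := fun n hn ↦ Function.invFunOn_eq hn.1
  have hsep : ∀ n ∈ T, ∀ n' ∈ T, n + 2 ≤ n' → 2 * a ≤ |g n - g n'| := by
    intro n hn n' hn' hlt
    have := add_le_of_floor_div_add_two_le (by positivity : 0 < 2 * a)
      (s := g n) (t := g n') (by simpa only [f, hgf n hn, hgf n' hn'] using hlt)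
    rw [abs_sub_comm]
    exact (by linarith : 2 * a ≤ g n' - g n).trans (le_abs_self _)
  have hdisj : T.PairwiseDisjoint fun n ↦ ball (x (g n)) a := by
    intro n hn n' hn' hne
    refine ball_disjoint_ball ((le_of_eq (by ring)).trans
      ((?_ : 2 * a ≤ |g n - g n'|).trans (hx _ (hgI n hn) _ (hgI n' hn'))))
    have : n % 2 = n' % 2 := hn.2.trans hn'.2.symm
    rcases (by omega : n + 2 ≤ n' ∨ n' + 2 ≤ n) with h | h
    · exact hsep n hn n' hn' h
    · exact abs_sub_comm (g n) (g n') ▸ hsep n' hn' n hn h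
  have hunion : T.encard * m ≤ μ (⋃ t ∈ I, ball (x t) a) :=
    calc T.encard * m = ∑' n : T, m := (ENNReal.tsum_set_const T m).symm
      _ ≤ ∑' n : T, μ (ball (x (g n)) a) := ENNReal.tsum_le_tsum fun n ↦ hm _ (hgI n n.2)
      _ = μ (⋃ n ∈ T, ball (x (g n)) a) :=
          (measure_biUnion T.to_countable hdisj fun _ _ ↦ measurableSet_ball).symm
      _ ≤ μ (⋃ t ∈ I, ball (x t) a) :=
          measure_mono <| iUnion₂_subset fun n hn ↦
            subset_biUnion_of_mem (u := fun t ↦ ball (x t) a) (hgI n hn)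
  have hfour : ENNReal.ofReal (4 * a) = 2 * ENNReal.ofReal (2 * a) := by
    rw [show 4 * a = 2 * (2 * a) by ring, ENNReal.ofReal_mul zero_le_two, ENNReal.ofReal_ofNat]
  calc m * volume I ≤ m * ((f '' I).encard * ENNReal.ofReal (2 * a)) := by
        gcongr; exact volume_le_encard_image_floor_mul (by positivity) I
    _ ≤ m * (2 * T.encard * ENNReal.ofReal (2 * a)) := by gcongr; exact_mod_cast hk
    _ = ENNReal.ofReal (4 * a) * (T.encard * m) := by rw [hfour]; ring
    _ ≤ ENNReal.ofReal (4 * a) * μ (⋃ t ∈ I, ball (x t) a) := by gcongr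

theorem ofReal_mul_volume_le_volume_biUnion_ball {I : Set ℝ} {x : ℝ → En 2}
    (hx : ∀ t ∈ I, ‖x t‖ = t) {a : ℝ} (ha : 0 < a) :
    ENNReal.ofReal (Real.pi * a / 4) * volume I ≤ volume (⋃ t ∈ I, ball (x t) a) := by
  have hsep : ∀ s ∈ I, ∀ t ∈ I, |s - t| ≤ dist (x s) (x t) := fun s hs t ht ↦ by
    simpa only [hx s hs, hx t ht, ← dist_eq_norm] using abs_norm_sub_norm_le (x s) (x t)
  have key := mul_volume_le_measure_biUnion_ball volume hsep ha
    (fun t _ ↦ (EuclideanSpace.volume_ball_fin_two (x t) a).ge)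
  have hvol : ENNReal.ofReal a ^ 2 * ENNReal.ofReal Real.pi =
      ENNReal.ofReal (4 * a) * ENNReal.ofReal (Real.pi * a / 4) := by
    rw [← ENNReal.ofReal_pow ha.le, ← ENNReal.ofReal_mul (by positivity),
      ← ENNReal.ofReal_mul (by positivity)]
    ring_nf
  rw [hvol, mul_assoc] at key
  exact (ENNReal.mul_le_mul_iff_right (by simpa using ha) ENNReal.ofReal_ne_top).1 key

theorem LipschitzOnWith.ball_subset_preimage_closedBall {α β : Type*} [PseudoMetricSpace α]
    [PseudoMetricSpace β] {K : ℝ≥0} {f : α → β} {s : Set α} (hf : LipschitzOnWith K f s)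
    {x : α} {ρ : ℝ} (hρ : ball x ρ ⊆ s) : ball x ρ ⊆ f ⁻¹' closedBall (f x) (K * ρ) := by
  intro y hy
  have hxs : x ∈ s := hρ (mem_ball_self (pos_of_mem_ball hy))
  exact (hf.dist_le_mul y (hρ hy) x hxs).trans (by gcongr; exact (mem_ball.1 hy).le)

theorem stmt6_general (L : NNReal) (c : ℝ) (hc4 : c ≤ 1 / 4) :
    ∃ d : ℝ, 0 < d ∧
      ∀ (D : Set (En 2)) (w : En 2 → ℝ) (ε δ r : ℝ) (I : Set ℝ) (x : ℝ → En 2),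
        IsOpen D → LipschitzOnWith L w D →
        0 < ε → 0 < δ → δ < r →
        MeasurableSet I → I ⊆ Icc δ r →
        ENNReal.ofReal (r / 2) < volume I →
        (∀ t ∈ I, x t ∈ sphere (0 : En 2) t ∧ w (x t) = ε / 2) →
        (∀ t ∈ I, ball (x t) (d * ε) ⊆ D) →
        (∀ t ∈ I, ball (x t) (d * ε) ⊆ {y : En 2 | c * ε ≤ w y ∧ w y ≤ (1 - c) * ε}) ∧
          ENNReal.ofReal (r * d * ε / 4) ≤ volume (⋃ t ∈ I, ball (x t) (d * ε)) := by
  refine ⟨1 / (8 * (L + 1)), by positivity, ?_⟩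
  intro D w ε δ r I x _ hw hε hδ hδr _ _ hI hxt hD
  set d : ℝ := 1 / (8 * (L + 1))
  have hLd : L * (d * ε) ≤ ε / 8 := by
    have : L * d ≤ 1 / 8 := by
      rw [mul_one_div, div_le_div_iff₀ (by positivity) (by norm_num)]
      linarith
    nlinarith
  refine ⟨fun t ht y hy ↦ ?_, ?_⟩
  · have hwy := hw.ball_subset_preimage_closedBall (hD t ht) hy
    rw [mem_preimage, mem_closedBall, (hxt t ht).2, Real.dist_eq, abs_le] at hwy
    constructor <;> nlinarith [hwy.1, hwy.2]
  · calc ENNReal.ofReal (r * d * ε / 4)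
          ≤ ENNReal.ofReal (Real.pi * (d * ε) / 4) * ENNReal.ofReal (r / 2) := by
          rw [← ENNReal.ofReal_mul (by positivity)]
          gcongr
          nlinarith [Real.pi_gt_three, mul_pos (by positivity : 0 < d * ε) (hδ.trans hδr)]
      _ ≤ ENNReal.ofReal (Real.pi * (d * ε) / 4) * volume I := by gcongr
      _ ≤ volume (⋃ t ∈ I, ball (x t) (d * ε)) :=
          ofReal_mul_volume_le_volume_biUnion_ball
            (fun t ht ↦ by simpa using (hxt t ht).1) (by positivity)

/-- Measure estimate from Lemma 4.5: for an `L`-Lipschitz function `w` on an open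
`D ⊆ ℝ²` and points `x_t ∈ ∂B_t` with `w(x_t) = ε/2` for `t` in a set `I ⊆ [δ, r]` of
measure `> r/2`, there is `d > 0` depending only on `L` and `c` such that (provided the
balls lie in `D`) each ball `B_{dε}(x_t)` is contained in the band
`{cε ≤ w ≤ (1−c)ε}` and the union of these balls has area at least `r d ε / 4`. -/
theorem stmt6 (L : NNReal) (c : ℝ) (hc : 0 < c) (hc4 : c ≤ 1 / 4) :
    ∃ d : ℝ, 0 < d ∧
      ∀ (D : Set (En 2)) (w : En 2 → ℝ) (ε δ r : ℝ) (I : Set ℝ) (x : ℝ → En 2),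
        IsOpen D → LipschitzOnWith L w D →
        0 < ε → 0 < δ → δ < r →
        MeasurableSet I → I ⊆ Icc δ r →
        ENNReal.ofReal (r / 2) < volume I →
        (∀ t ∈ I, x t ∈ sphere (0 : En 2) t ∧ w (x t) = ε / 2) →
        (∀ t ∈ I, ball (x t) (d * ε) ⊆ D) →
        (∀ t ∈ I, ball (x t) (d * ε) ⊆ {y : En 2 | c * ε ≤ w y ∧ w y ≤ (1 - c) * ε}) ∧
          ENNReal.ofReal (r * d * ε / 4) ≤ volume (⋃ t ∈ I, ball (x t) (d * ε)) :=
  stmt6_general L c hc4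
end
end

section
/- Let v : ℝⁿ → ℝ be locally Lipschitz and satisfy ∇v(x)·x = v(x) for almost every x. Then v is positively homogeneous of degree 1: v(λx) = λv(x) for all λ > 0 and all x. -/
/-!
On the ray through `x`, the Euler identity at `t • x` says exactly that `t ↦ v (t • x) / t` has
derivative zero at `t`. By Rademacher's theorem and Fubini (dilations preserve Haar-null sets),
for almost every `x` this holds for almost every `t`; as `v` is Lipschitz on compact sets,
`t ↦ v (t • x) / t` is absolutely continuous on `[1, l]`, hence constant there, giving
`v (l • x) = l * v x` on a dense set of `x`, and everywhere by continuity.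
-/

open MeasureTheory Metric Set Filter
open scoped Topology ENNReal NNReal RealInnerProductSpace

noncomputable section

section

variable {E : Type*} [NormedAddCommGroup E] [NormedSpace ℝ E]

theorem hasDerivAt_comp_smul_div_of_fderiv_apply_self {v : E → ℝ} {x : E} {t : ℝ}
    (ht : t ≠ 0) (hv : DifferentiableAt ℝ v (t • x))
    (heuler : fderiv ℝ v (t • x) (t • x) = v (t • x)) :
    HasDerivAt (fun s : ℝ => v (s • x) / s) 0 t := by
  have hray : HasDerivAt (fun s : ℝ => v (s • x)) (fderiv ℝ v (t • x) x) t := by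
    have h := hv.hasFDerivAt.comp_hasDerivAt t ((hasDerivAt_id t).smul_const x)
    rw [one_smul] at h
    exact h
  refine (hray.fun_div (hasDerivAt_id' t) ht).congr_deriv ?_
  rw [map_smul, smul_eq_mul] at heuler
  rw [← heuler]
  ring

theorem LocallyLipschitz.apply_smul_eq_mul_of_ae_fderiv_apply_self_on_ray {v : E → ℝ}
    (hv : LocallyLipschitz v) {x : E}
    (hray : ∀ᵐ t : ℝ, t ≠ 0 →
      DifferentiableAt ℝ v (t • x) ∧ fderiv ℝ v (t • x) (t • x) = v (t • x))
    {l : ℝ} (hl : 0 < l) : v (l • x) = l * v x := by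
  have hpos : ∀ s ∈ uIcc 1 l, 0 < s := fun s hs =>
    lt_of_lt_of_le (lt_min one_pos hl) hs.1
  have hnum : AbsolutelyContinuousOnInterval (fun s : ℝ => v (s • x)) 1 l := by
    have hlip : LocallyLipschitz (fun s : ℝ => v (s • x)) :=
      hv.comp (ContinuousLinearMap.toSpanSingleton ℝ x).lipschitz.locallyLipschitz
    obtain ⟨K, hK⟩ :=
      hlip.locallyLipschitzOn.exists_lipschitzOnWith_of_compact (s := uIcc 1 l) isCompact_uIcc
    exact hK.absolutelyContinuousOnInterval
  have hden : AbsolutelyContinuousOnInterval (fun s : ℝ => s⁻¹) 1 l :=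
    ContDiffOn.absolutelyContinuousOnInterval
      ((contDiffOn_inv (𝕜 := ℝ)).mono fun s hs => (hpos s hs).ne')
  obtain ⟨C, hC⟩ := (hnum.fun_mul hden).const_of_ae_hasDerivAt_zero (by
    filter_upwards [hray] with s hs hmem
    obtain ⟨hdiff, heuler⟩ := hs (hpos s hmem).ne'
    simpa [div_eq_mul_inv] using
      hasDerivAt_comp_smul_div_of_fderiv_apply_self (hpos s hmem).ne' hdiff heuler)
  have h := (hC l right_mem_uIcc).trans (hC 1 left_mem_uIcc).symm
  field_simp at h
  simpa using h

end

section FiniteDimensional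

variable {E : Type*} [NormedAddCommGroup E] [NormedSpace ℝ E] [FiniteDimensional ℝ E]
  [MeasurableSpace E] [BorelSpace E] (μ : Measure E) [μ.IsAddHaarMeasure]

theorem LocallyLipschitz.ae_differentiableAt {F : Type*} [NormedAddCommGroup F]
    [NormedSpace ℝ F] [FiniteDimensional ℝ F] {f : E → F} (hf : LocallyLipschitz f) :
    ∀ᵐ x ∂μ, DifferentiableAt ℝ f x := by
  have hball : ∀ k : ℕ, ∀ᵐ x ∂μ, x ∈ ball (0 : E) k → DifferentiableAt ℝ f x := by
    intro k
    obtain ⟨K, hK⟩ := hf.locallyLipschitzOn.exists_lipschitzOnWith_of_compact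
      (isCompact_closedBall (0 : E) k)
    filter_upwards [(hK.mono ball_subset_closedBall).ae_differentiableWithinAt_of_mem (μ := μ)]
      with x hx hxk
    exact (hx hxk).differentiableAt (isOpen_ball.mem_nhds hxk)
  filter_upwards [ae_all_iff.2 hball] with x hx
  obtain ⟨k, hk⟩ := exists_nat_gt ‖x‖
  exact hx k (mem_ball_zero_iff.2 hk)

theorem ae_ae_smul_of_ae {p : E → Prop} (hp : ∀ᵐ y ∂μ, p y) :
    ∀ᵐ x ∂μ, ∀ᵐ t : ℝ, t ≠ 0 → p (t • x) := by
  obtain ⟨N, hpN, hNm, hN⟩ := exists_measurable_superset_of_null (ae_iff.1 hp)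
  suffices h : ∀ᵐ x ∂μ, ∀ᵐ t : ℝ, t ≠ 0 → t • x ∉ N by
    filter_upwards [h] with x hx
    filter_upwards [hx] with t ht ht0
    by_contra hpt
    exact ht ht0 (hpN hpt)
  have hmeas : MeasurableSet {z : E × ℝ | z.2 ≠ 0 → z.2 • z.1 ∉ N} :=
    (measurableSet_singleton (0 : ℝ)).preimage measurable_snd |>.compl.himp
      ((hNm.preimage (measurable_snd.smul measurable_fst)).compl)
  refine (Measure.ae_ae_comm hmeas).2 (ae_of_all _ fun t => ?_)
  refine eventually_imp_distrib_left.2 fun ht => ?_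
  exact (Measure.quasiMeasurePreserving_smul μ ht).ae
    (p := (· ∉ N)) (measure_eq_zero_iff_ae_notMem.1 hN)

theorem LocallyLipschitz.apply_smul_eq_mul_of_ae_fderiv_apply_self {v : E → ℝ}
    (hv : LocallyLipschitz v) (heuler : ∀ᵐ x ∂μ, fderiv ℝ v x x = v x) {l : ℝ} (hl : 0 < l)
    (x : E) : v (l • x) = l * v x := by
  have hgood : ∀ᵐ y ∂μ, DifferentiableAt ℝ v y ∧ fderiv ℝ v y y = v y :=
    (hv.ae_differentiableAt μ).and heuler
  have hdense := Measure.dense_of_ae (ae_ae_smul_of_ae μ hgood)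
  have heq : (fun y => v (l • y)) = fun y => l * v y :=
    Continuous.ext_on hdense (hv.continuous.comp (continuous_const_smul l))
      (continuous_const.mul hv.continuous)
      fun y hy => hv.apply_smul_eq_mul_of_ae_fderiv_apply_self_on_ray hy hl
  exact congrFun heq x

end FiniteDimensional

/-- Euler's identity a.e. implies homogeneity of degree one for locally Lipschitz
functions. -/
theorem stmt14 {n : ℕ} (v : En n → ℝ) (hlip : LocallyLipschitz v)
    (heuler : ∀ᵐ x : En n, ⟪gradient v x, x⟫ = v x) :
    ∀ l : ℝ, 0 < l → ∀ x, v (l • x) = l * v x := fun _ hl =>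
  hlip.apply_smul_eq_mul_of_ae_fderiv_apply_self volume (by simpa using heuler) hl

end
end
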